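/- Index the degree-2 maximal order modes (v,w), 0 ≤ v,w ≤ 2, by i = 3w + v + 1, so the order is (0,0),(1,0),(2,0),(0,1),(1,1),(2,1),(0,2),(1,2),(2,2). Let M = diag(4, 4/3, 4/5, 4/3, 4/9, 4/15, 4/5, 4/15, 4/25) be the 9×9 modal mass matrix. Let D_x be the 9×9 matrix acting on mode basis vectors by D_x e_{(1,w)} = e_{(0,w)}, D_x e_{(2,w)} = 3·e_{(1,w)}, and D_x e_{(0,w)} = 0 for each w; let D_y act analogously in the second index. For θ0, θ1 ∈ ℝ, let C(θ0,θ1) be the 9×12 matrix with rows (in the above mode order): row 1: (−1/2,0,0, 1/2,0,0, 1/2,0,0, −1/2,0,0); row 2: (0,−1/2,0, −θ0,0,0, 0,−1/2,0, −θ0,0,0); row 3: (0,0,−1/2, θ1,0,0, 0,0,1/2, −θ1,0,0); row 4: (−θ0,0,0, 0,1/2,0, −θ0,0,0, 0,1/2,0); row 5: (0,−θ0,0, 0,−θ0,0, 0,θ0,0, 0,θ0,0); row 6: (0,0,−θ0, 0,θ1,0, 0,0,−θ0, 0,θ1,0); row 7: (−θ1,0,0, 0,0,1/2, θ1,0,0,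 0,0,−1/2); row 8: (0,−θ1,0, 0,0,−θ0, 0,−θ1,0, 0,0,−θ0); row 9: (0,0,−θ1, 0,0,θ1, 0,0,θ1, 0,0,−θ1). Suppose θ1 ≠ 0 and Q is a real symmetric 9×9 matrix such that Q·D_x and Q·D_y are antisymmetric, M + Q is positive definite, and Q·C(θ0,θ1) = −M·(C(θ0,θ1) − C(−3/2, 5/2)). Then θ0 = −3/2, θ1 = 5/2, and Q = 0. -/
import Mathlib


open Matrix

/-- Modal mass matrix of the degree-2 maximal order tensor-product Legendre basis, in
the mode order `(0,0),(1,0),(2,0),(0,1),(1,1),(2,1),(0,2),(1,2),(2,2)`. -/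
noncomputable def massK2 : Matrix (Fin 9) (Fin 9) ℝ :=
  Matrix.diagonal ![4, 4/3, 4/5, 4/3, 4/9, 4/15, 4/5, 4/15, 4/25]

/-- Modal differentiation matrix in `x` for the degree-2 maximal order basis:
`Dₓ e_{(1,w)} = e_{(0,w)}`, `Dₓ e_{(2,w)} = 3 e_{(1,w)}`, `Dₓ e_{(0,w)} = 0`. -/
noncomputable def DxK2 : Matrix (Fin 9) (Fin 9) ℝ :=
  !![0,1,0, 0,0,0, 0,0,0;
     0,0,3, 0,0,0, 0,0,0;
     0,0,0, 0,0,0, 0,0,0;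
     0,0,0, 0,1,0, 0,0,0;
     0,0,0, 0,0,3, 0,0,0;
     0,0,0, 0,0,0, 0,0,0;
     0,0,0, 0,0,0, 0,1,0;
     0,0,0, 0,0,0, 0,0,3;
     0,0,0, 0,0,0, 0,0,0]

/-- Modal differentiation matrix in `y` for the degree-2 maximal order basis:
`D_y e_{(v,1)} = e_{(v,0)}`, `D_y e_{(v,2)} = 3 e_{(v,1)}`, `D_y e_{(v,0)} = 0`. -/
noncomputable def DyK2 : Matrix (Fin 9) (Fin 9) ℝ :=
  !![0,0,0, 1,0,0, 0,0,0;
     0,0,0, 0,1,0, 0,0,0;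
     0,0,0, 0,0,1, 0,0,0;
     0,0,0, 0,0,0, 3,0,0;
     0,0,0, 0,0,0, 0,3,0;
     0,0,0, 0,0,0, 0,0,3;
     0,0,0, 0,0,0, 0,0,0;
     0,0,0, 0,0,0, 0,0,0;
     0,0,0, 0,0,0, 0,0,0]

/-- Modal correction matrix of the tensor product of the extended range of stable
one-dimensional FR correction functions of Vincent et al. (2015) for degree 2, with
parameters `θ0 = (63c0 + 105c1 + 18)/(175c1² − 42c0 − 12)` and `θ1 = 5/(5c1 + 2)`. -/
noncomputable def corrExt (θ0 θ1 : ℝ) : Matrix (Fin 9) (Fin 12) ℝ :=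
  !![-1/2,0,0,   1/2,0,0,    1/2,0,0,    -1/2,0,0;
     0,-1/2,0,   -θ0,0,0,    0,-1/2,0,   -θ0,0,0;
     0,0,-1/2,   θ1,0,0,     0,0,1/2,    -θ1,0,0;
     -θ0,0,0,    0,1/2,0,    -θ0,0,0,    0,1/2,0;
     0,-θ0,0,    0,-θ0,0,    0,θ0,0,     0,θ0,0;
     0,0,-θ0,    0,θ1,0,     0,0,-θ0,    0,θ1,0;
     -θ1,0,0,    0,0,1/2,    θ1,0,0,     0,0,-1/2;
     0,-θ1,0,    0,0,-θ0,    0,-θ1,0,    0,0,-θ0;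
     0,0,-θ1,    0,0,θ1,     0,0,θ1,     0,0,-θ1]

@[simp] lemma finv_3_2 : ((OfNat.ofNat 2 : Fin 3)) = Fin.succ (OfNat.ofNat 1 : Fin 2) := rfl
@[simp] lemma finv_4_2 : ((OfNat.ofNat 2 : Fin 4)) = Fin.succ (OfNat.ofNat 1 : Fin 3) := rfl
@[simp] lemma finv_4_3 : ((OfNat.ofNat 3 : Fin 4)) = Fin.succ (OfNat.ofNat 2 : Fin 3) := rfl
@[simp] lemma finv_5_2 : ((OfNat.ofNat 2 : Fin 5)) = Fin.succ (OfNat.ofNat 1 : Fin 4) := rfl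
@[simp] lemma finv_5_3 : ((OfNat.ofNat 3 : Fin 5)) = Fin.succ (OfNat.ofNat 2 : Fin 4) := rfl
@[simp] lemma finv_5_4 : ((OfNat.ofNat 4 : Fin 5)) = Fin.succ (OfNat.ofNat 3 : Fin 4) := rfl
@[simp] lemma finv_6_2 : ((OfNat.ofNat 2 : Fin 6)) = Fin.succ (OfNat.ofNat 1 : Fin 5) := rfl
@[simp] lemma finv_6_3 : ((OfNat.ofNat 3 : Fin 6)) = Fin.succ (OfNat.ofNat 2 : Fin 5) := rfl
@[simp] lemma finv_6_4 : ((OfNat.ofNat 4 : Fin 6)) = Fin.succ (OfNat.ofNat 3 : Fin 5) := rfl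
@[simp] lemma finv_6_5 : ((OfNat.ofNat 5 : Fin 6)) = Fin.succ (OfNat.ofNat 4 : Fin 5) := rfl
@[simp] lemma finv_7_2 : ((OfNat.ofNat 2 : Fin 7)) = Fin.succ (OfNat.ofNat 1 : Fin 6) := rfl
@[simp] lemma finv_7_3 : ((OfNat.ofNat 3 : Fin 7)) = Fin.succ (OfNat.ofNat 2 : Fin 6) := rfl
@[simp] lemma finv_7_4 : ((OfNat.ofNat 4 : Fin 7)) = Fin.succ (OfNat.ofNat 3 : Fin 6) := rfl
@[simp] lemma finv_7_5 : ((OfNat.ofNat 5 : Fin 7)) = Fin.succ (OfNat.ofNat 4 : Fin 6) := rfl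
@[simp] lemma finv_7_6 : ((OfNat.ofNat 6 : Fin 7)) = Fin.succ (OfNat.ofNat 5 : Fin 6) := rfl
@[simp] lemma finv_8_2 : ((OfNat.ofNat 2 : Fin 8)) = Fin.succ (OfNat.ofNat 1 : Fin 7) := rfl
@[simp] lemma finv_8_3 : ((OfNat.ofNat 3 : Fin 8)) = Fin.succ (OfNat.ofNat 2 : Fin 7) := rfl
@[simp] lemma finv_8_4 : ((OfNat.ofNat 4 : Fin 8)) = Fin.succ (OfNat.ofNat 3 : Fin 7) := rfl
@[simp] lemma finv_8_5 : ((OfNat.ofNat 5 : Fin 8)) = Fin.succ (OfNat.ofNat 4 : Fin 7) := rfl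
@[simp] lemma finv_8_6 : ((OfNat.ofNat 6 : Fin 8)) = Fin.succ (OfNat.ofNat 5 : Fin 7) := rfl
@[simp] lemma finv_8_7 : ((OfNat.ofNat 7 : Fin 8)) = Fin.succ (OfNat.ofNat 6 : Fin 7) := rfl
@[simp] lemma finv_9_2 : ((OfNat.ofNat 2 : Fin 9)) = Fin.succ (OfNat.ofNat 1 : Fin 8) := rfl
@[simp] lemma finv_9_3 : ((OfNat.ofNat 3 : Fin 9)) = Fin.succ (OfNat.ofNat 2 : Fin 8) := rfl
@[simp] lemma finv_9_4 : ((OfNat.ofNat 4 : Fin 9)) = Fin.succ (OfNat.ofNat 3 : Fin 8) := rfl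
@[simp] lemma finv_9_5 : ((OfNat.ofNat 5 : Fin 9)) = Fin.succ (OfNat.ofNat 4 : Fin 8) := rfl
@[simp] lemma finv_9_6 : ((OfNat.ofNat 6 : Fin 9)) = Fin.succ (OfNat.ofNat 5 : Fin 8) := rfl
@[simp] lemma finv_9_7 : ((OfNat.ofNat 7 : Fin 9)) = Fin.succ (OfNat.ofNat 6 : Fin 8) := rfl
@[simp] lemma finv_9_8 : ((OfNat.ofNat 8 : Fin 9)) = Fin.succ (OfNat.ofNat 7 : Fin 8) := rfl
@[simp] lemma finv_10_2 : ((OfNat.ofNat 2 : Fin 10)) = Fin.succ (OfNat.ofNat 1 : Fin 9) := rfl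
@[simp] lemma finv_10_3 : ((OfNat.ofNat 3 : Fin 10)) = Fin.succ (OfNat.ofNat 2 : Fin 9) := rfl
@[simp] lemma finv_10_4 : ((OfNat.ofNat 4 : Fin 10)) = Fin.succ (OfNat.ofNat 3 : Fin 9) := rfl
@[simp] lemma finv_10_5 : ((OfNat.ofNat 5 : Fin 10)) = Fin.succ (OfNat.ofNat 4 : Fin 9) := rfl
@[simp] lemma finv_10_6 : ((OfNat.ofNat 6 : Fin 10)) = Fin.succ (OfNat.ofNat 5 : Fin 9) := rfl
@[simp] lemma finv_10_7 : ((OfNat.ofNat 7 : Fin 10)) = Fin.succ (OfNat.ofNat 6 : Fin 9) := rfl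
@[simp] lemma finv_10_8 : ((OfNat.ofNat 8 : Fin 10)) = Fin.succ (OfNat.ofNat 7 : Fin 9) := rfl
@[simp] lemma finv_10_9 : ((OfNat.ofNat 9 : Fin 10)) = Fin.succ (OfNat.ofNat 8 : Fin 9) := rfl
@[simp] lemma finv_11_2 : ((OfNat.ofNat 2 : Fin 11)) = Fin.succ (OfNat.ofNat 1 : Fin 10) := rfl
@[simp] lemma finv_11_3 : ((OfNat.ofNat 3 : Fin 11)) = Fin.succ (OfNat.ofNat 2 : Fin 10) := rfl
@[simp] lemma finv_11_4 : ((OfNat.ofNat 4 : Fin 11)) = Fin.succ (OfNat.ofNat 3 : Fin 10) := rfl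
@[simp] lemma finv_11_5 : ((OfNat.ofNat 5 : Fin 11)) = Fin.succ (OfNat.ofNat 4 : Fin 10) := rfl
@[simp] lemma finv_11_6 : ((OfNat.ofNat 6 : Fin 11)) = Fin.succ (OfNat.ofNat 5 : Fin 10) := rfl
@[simp] lemma finv_11_7 : ((OfNat.ofNat 7 : Fin 11)) = Fin.succ (OfNat.ofNat 6 : Fin 10) := rfl
@[simp] lemma finv_11_8 : ((OfNat.ofNat 8 : Fin 11)) = Fin.succ (OfNat.ofNat 7 : Fin 10) := rfl
@[simp] lemma finv_11_9 : ((OfNat.ofNat 9 : Fin 11)) = Fin.succ (OfNat.ofNat 8 : Fin 10) := rfl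
@[simp] lemma finv_11_10 : ((OfNat.ofNat 10 : Fin 11)) = Fin.succ (OfNat.ofNat 9 : Fin 10) := rfl
@[simp] lemma finv_12_2 : ((OfNat.ofNat 2 : Fin 12)) = Fin.succ (OfNat.ofNat 1 : Fin 11) := rfl
@[simp] lemma finv_12_3 : ((OfNat.ofNat 3 : Fin 12)) = Fin.succ (OfNat.ofNat 2 : Fin 11) := rfl
@[simp] lemma finv_12_4 : ((OfNat.ofNat 4 : Fin 12)) = Fin.succ (OfNat.ofNat 3 : Fin 11) := rfl
@[simp] lemma finv_12_5 : ((OfNat.ofNat 5 : Fin 12)) = Fin.succ (OfNat.ofNat 4 : Fin 11) := rfl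
@[simp] lemma finv_12_6 : ((OfNat.ofNat 6 : Fin 12)) = Fin.succ (OfNat.ofNat 5 : Fin 11) := rfl
@[simp] lemma finv_12_7 : ((OfNat.ofNat 7 : Fin 12)) = Fin.succ (OfNat.ofNat 6 : Fin 11) := rfl
@[simp] lemma finv_12_8 : ((OfNat.ofNat 8 : Fin 12)) = Fin.succ (OfNat.ofNat 7 : Fin 11) := rfl
@[simp] lemma finv_12_9 : ((OfNat.ofNat 9 : Fin 12)) = Fin.succ (OfNat.ofNat 8 : Fin 11) := rfl
@[simp] lemma finv_12_10 : ((OfNat.ofNat 10 : Fin 12)) = Fin.succ (OfNat.ofNat 9 : Fin 11) := rfl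
@[simp] lemma finv_12_11 : ((OfNat.ofNat 11 : Fin 12)) = Fin.succ (OfNat.ofNat 10 : Fin 11) := rfl
lemma rev_3_2 : (Fin.succ (OfNat.ofNat 2 : Fin 3)) = (OfNat.ofNat 3 : Fin 4) := rfl
lemma rev_4_2 : (Fin.succ (OfNat.ofNat 2 : Fin 4)) = (OfNat.ofNat 3 : Fin 5) := rfl
lemma rev_4_3 : (Fin.succ (OfNat.ofNat 3 : Fin 4)) = (OfNat.ofNat 4 : Fin 5) := rfl
lemma rev_5_2 : (Fin.succ (OfNat.ofNat 2 : Fin 5)) = (OfNat.ofNat 3 : Fin 6) := rfl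
lemma rev_5_3 : (Fin.succ (OfNat.ofNat 3 : Fin 5)) = (OfNat.ofNat 4 : Fin 6) := rfl
lemma rev_5_4 : (Fin.succ (OfNat.ofNat 4 : Fin 5)) = (OfNat.ofNat 5 : Fin 6) := rfl
lemma rev_6_2 : (Fin.succ (OfNat.ofNat 2 : Fin 6)) = (OfNat.ofNat 3 : Fin 7) := rfl
lemma rev_6_3 : (Fin.succ (OfNat.ofNat 3 : Fin 6)) = (OfNat.ofNat 4 : Fin 7) := rfl
lemma rev_6_4 : (Fin.succ (OfNat.ofNat 4 : Fin 6)) = (OfNat.ofNat 5 : Fin 7) := rfl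
lemma rev_6_5 : (Fin.succ (OfNat.ofNat 5 : Fin 6)) = (OfNat.ofNat 6 : Fin 7) := rfl
lemma rev_7_2 : (Fin.succ (OfNat.ofNat 2 : Fin 7)) = (OfNat.ofNat 3 : Fin 8) := rfl
lemma rev_7_3 : (Fin.succ (OfNat.ofNat 3 : Fin 7)) = (OfNat.ofNat 4 : Fin 8) := rfl
lemma rev_7_4 : (Fin.succ (OfNat.ofNat 4 : Fin 7)) = (OfNat.ofNat 5 : Fin 8) := rfl
lemma rev_7_5 : (Fin.succ (OfNat.ofNat 5 : Fin 7)) = (OfNat.ofNat 6 : Fin 8) := rfl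
lemma rev_7_6 : (Fin.succ (OfNat.ofNat 6 : Fin 7)) = (OfNat.ofNat 7 : Fin 8) := rfl
lemma rev_8_2 : (Fin.succ (OfNat.ofNat 2 : Fin 8)) = (OfNat.ofNat 3 : Fin 9) := rfl
lemma rev_8_3 : (Fin.succ (OfNat.ofNat 3 : Fin 8)) = (OfNat.ofNat 4 : Fin 9) := rfl
lemma rev_8_4 : (Fin.succ (OfNat.ofNat 4 : Fin 8)) = (OfNat.ofNat 5 : Fin 9) := rfl
lemma rev_8_5 : (Fin.succ (OfNat.ofNat 5 : Fin 8)) = (OfNat.ofNat 6 : Fin 9) := rfl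
lemma rev_8_6 : (Fin.succ (OfNat.ofNat 6 : Fin 8)) = (OfNat.ofNat 7 : Fin 9) := rfl
lemma rev_8_7 : (Fin.succ (OfNat.ofNat 7 : Fin 8)) = (OfNat.ofNat 8 : Fin 9) := rfl
lemma rev_9_2 : (Fin.succ (OfNat.ofNat 2 : Fin 9)) = (OfNat.ofNat 3 : Fin 10) := rfl
lemma rev_9_3 : (Fin.succ (OfNat.ofNat 3 : Fin 9)) = (OfNat.ofNat 4 : Fin 10) := rfl
lemma rev_9_4 : (Fin.succ (OfNat.ofNat 4 : Fin 9)) = (OfNat.ofNat 5 : Fin 10) := rfl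
lemma rev_9_5 : (Fin.succ (OfNat.ofNat 5 : Fin 9)) = (OfNat.ofNat 6 : Fin 10) := rfl
lemma rev_9_6 : (Fin.succ (OfNat.ofNat 6 : Fin 9)) = (OfNat.ofNat 7 : Fin 10) := rfl
lemma rev_9_7 : (Fin.succ (OfNat.ofNat 7 : Fin 9)) = (OfNat.ofNat 8 : Fin 10) := rfl
lemma rev_9_8 : (Fin.succ (OfNat.ofNat 8 : Fin 9)) = (OfNat.ofNat 9 : Fin 10) := rfl
lemma rev_10_2 : (Fin.succ (OfNat.ofNat 2 : Fin 10)) = (OfNat.ofNat 3 : Fin 11) := rfl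
lemma rev_10_3 : (Fin.succ (OfNat.ofNat 3 : Fin 10)) = (OfNat.ofNat 4 : Fin 11) := rfl
lemma rev_10_4 : (Fin.succ (OfNat.ofNat 4 : Fin 10)) = (OfNat.ofNat 5 : Fin 11) := rfl
lemma rev_10_5 : (Fin.succ (OfNat.ofNat 5 : Fin 10)) = (OfNat.ofNat 6 : Fin 11) := rfl
lemma rev_10_6 : (Fin.succ (OfNat.ofNat 6 : Fin 10)) = (OfNat.ofNat 7 : Fin 11) := rfl
lemma rev_10_7 : (Fin.succ (OfNat.ofNat 7 : Fin 10)) = (OfNat.ofNat 8 : Fin 11) := rfl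
lemma rev_10_8 : (Fin.succ (OfNat.ofNat 8 : Fin 10)) = (OfNat.ofNat 9 : Fin 11) := rfl
lemma rev_10_9 : (Fin.succ (OfNat.ofNat 9 : Fin 10)) = (OfNat.ofNat 10 : Fin 11) := rfl
lemma rev_11_2 : (Fin.succ (OfNat.ofNat 2 : Fin 11)) = (OfNat.ofNat 3 : Fin 12) := rfl
lemma rev_11_3 : (Fin.succ (OfNat.ofNat 3 : Fin 11)) = (OfNat.ofNat 4 : Fin 12) := rfl
lemma rev_11_4 : (Fin.succ (OfNat.ofNat 4 : Fin 11)) = (OfNat.ofNat 5 : Fin 12) := rfl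
lemma rev_11_5 : (Fin.succ (OfNat.ofNat 5 : Fin 11)) = (OfNat.ofNat 6 : Fin 12) := rfl
lemma rev_11_6 : (Fin.succ (OfNat.ofNat 6 : Fin 11)) = (OfNat.ofNat 7 : Fin 12) := rfl
lemma rev_11_7 : (Fin.succ (OfNat.ofNat 7 : Fin 11)) = (OfNat.ofNat 8 : Fin 12) := rfl
lemma rev_11_8 : (Fin.succ (OfNat.ofNat 8 : Fin 11)) = (OfNat.ofNat 9 : Fin 12) := rfl
lemma rev_11_9 : (Fin.succ (OfNat.ofNat 9 : Fin 11)) = (OfNat.ofNat 10 : Fin 12) := rfl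
lemma rev_11_10 : (Fin.succ (OfNat.ofNat 10 : Fin 11)) = (OfNat.ofNat 11 : Fin 12) := rfl

/-- On quadrilaterals, no tensor-product correction matrix from the extended family of
Vincent et al. (2015) other than DG itself (`θ0 = -3/2`, `θ1 = 5/2`, `Q = 0`) is the
correction matrix of a linearly stable filtered DG scheme. -/
theorem stmt_9 (θ0 θ1 : ℝ) (hθ1 : θ1 ≠ 0) (Q : Matrix (Fin 9) (Fin 9) ℝ)
    (hsym : Qᵀ = Q)
    (hx : (Q * DxK2)ᵀ = -(Q * DxK2))
    (hy : (Q * DyK2)ᵀ = -(Q * DyK2))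
    (hpos : (massK2 + Q).PosDef)
    (heq : Q * corrExt θ0 θ1 = -(massK2 * (corrExt θ0 θ1 - corrExt (-3/2) (5/2)))) :
    θ0 = -3/2 ∧ θ1 = 5/2 ∧ Q = 0 := by
  have hs : ∀ i j : Fin 9, Q j i = Q i j := fun i j => congrFun (congrFun hsym i) j
  have hQ33 : Q 3 3 = 0 := by
    have h := congrFun (congrFun hx 3) 4
    simp [DxK2, DyK2, Matrix.mul_apply, Fin.sum_univ_succ, Matrix.transpose_apply, Matrix.neg_apply] at h
    try simp only [rev_3_2, rev_4_2, rev_4_3, rev_5_2, rev_5_3, rev_5_4, rev_6_2, rev_6_3, rev_6_4, rev_6_5, rev_7_2, rev_7_3, rev_7_4, rev_7_5, rev_7_6, rev_8_2, rev_8_3, rev_8_4, rev_8_5, rev_8_6, rev_8_7, rev_9_2, rev_9_3, rev_9_4, rev_9_5, rev_9_6, rev_9_7, rev_9_8, rev_10_2, rev_10_3, rev_10_4, rev_10_5, rev_10_6, rev_10_7, rev_10_8, rev_10_9, rev_11_2, rev_11_3, rev_11_4, rev_11_5, rev_11_6, rev_11_7, rev_11_8, rev_11_9, rev_11_10] at 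h
    linarith
  have hQ06 : Q 0 6 = 0 := by
    have h := congrFun (congrFun hx 0) 7
    simp [DxK2, DyK2, Matrix.mul_apply, Fin.sum_univ_succ, Matrix.transpose_apply, Matrix.neg_apply] at h
    try simp only [rev_3_2, rev_4_2, rev_4_3, rev_5_2, rev_5_3, rev_5_4, rev_6_2, rev_6_3, rev_6_4, rev_6_5, rev_7_2, rev_7_3, rev_7_4, rev_7_5, rev_7_6, rev_8_2, rev_8_3, rev_8_4, rev_8_5, rev_8_6, rev_8_7, rev_9_2, rev_9_3, rev_9_4, rev_9_5, rev_9_6, rev_9_7, rev_9_8, rev_10_2, rev_10_3, rev_10_4, rev_10_5, rev_10_6, rev_10_7, rev_10_8, rev_10_9, rev_11_2, rev_11_3, rev_11_4, rev_11_5, rev_11_6, rev_11_7, rev_11_8, rev_11_9, rev_11_10] at h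
    linarith
  have hQ66 : Q 6 6 = 0 := by
    have h := congrFun (congrFun hx 6) 7
    simp [DxK2, DyK2, Matrix.mul_apply, Fin.sum_univ_succ, Matrix.transpose_apply, Matrix.neg_apply] at h
    try simp only [rev_3_2, rev_4_2, rev_4_3, rev_5_2, rev_5_3, rev_5_4, rev_6_2, rev_6_3, rev_6_4, rev_6_5, rev_7_2, rev_7_3, rev_7_4, rev_7_5, rev_7_6, rev_8_2, rev_8_3, rev_8_4, rev_8_5, rev_8_6, rev_8_7, rev_9_2, rev_9_3, rev_9_4, rev_9_5, rev_9_6, rev_9_7, rev_9_8, rev_10_2, rev_10_3, rev_10_4, rev_10_5, rev_10_6, rev_10_7, rev_10_8, rev_10_9, rev_11_2, rev_11_3, rev_11_4, rev_11_5, rev_11_6, rev_11_7, rev_11_8, rev_11_9, rev_11_10] at h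
    linarith
  have hQ86eq : Q 8 6 = -(3 * Q 7 7) := by
    have h := congrFun (congrFun hx 8) 7
    simp [DxK2, DyK2, Matrix.mul_apply, Fin.sum_univ_succ, Matrix.transpose_apply, Matrix.neg_apply] at h
    try simp only [rev_3_2, rev_4_2, rev_4_3, rev_5_2, rev_5_3, rev_5_4, rev_6_2, rev_6_3, rev_6_4, rev_6_5, rev_7_2, rev_7_3, rev_7_4, rev_7_5, rev_7_6, rev_8_2, rev_8_3, rev_8_4, rev_8_5, rev_8_6, rev_8_7, rev_9_2, rev_9_3, rev_9_4, rev_9_5, rev_9_6, rev_9_7, rev_9_8, rev_10_2, rev_10_3, rev_10_4, rev_10_5, rev_10_6, rev_10_7, rev_10_8, rev_10_9, rev_11_2, rev_11_3, rev_11_4, rev_11_5, rev_11_6, rev_11_7, rev_11_8, rev_11_9, rev_11_10] at h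
    linarith
  have hQ00 : Q 0 0 = 0 := by
    have h := congrFun (congrFun hy 0) 3
    simp [DxK2, DyK2, Matrix.mul_apply, Fin.sum_univ_succ, Matrix.transpose_apply, Matrix.neg_apply] at h
    try simp only [rev_3_2, rev_4_2, rev_4_3, rev_5_2, rev_5_3, rev_5_4, rev_6_2, rev_6_3, rev_6_4, rev_6_5, rev_7_2, rev_7_3, rev_7_4, rev_7_5, rev_7_6, rev_8_2, rev_8_3, rev_8_4, rev_8_5, rev_8_6, rev_8_7, rev_9_2, rev_9_3, rev_9_4, rev_9_5, rev_9_6, rev_9_7, rev_9_8, rev_10_2, rev_10_3, rev_10_4, rev_10_5, rev_10_6, rev_10_7, rev_10_8, rev_10_9, rev_11_2, rev_11_3, rev_11_4, rev_11_5, rev_11_6, rev_11_7, rev_11_8, rev_11_9, rev_11_10] at h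
    linarith
  have hQ20 : Q 2 0 = 0 := by
    have h := congrFun (congrFun hy 2) 3
    simp [DxK2, DyK2, Matrix.mul_apply, Fin.sum_univ_succ, Matrix.transpose_apply, Matrix.neg_apply] at h
    try simp only [rev_3_2, rev_4_2, rev_4_3, rev_5_2, rev_5_3, rev_5_4, rev_6_2, rev_6_3, rev_6_4, rev_6_5, rev_7_2, rev_7_3, rev_7_4, rev_7_5, rev_7_6, rev_8_2, rev_8_3, rev_8_4, rev_8_5, rev_8_6, rev_8_7, rev_9_2, rev_9_3, rev_9_4, rev_9_5, rev_9_6, rev_9_7, rev_9_8, rev_10_2, rev_10_3, rev_10_4, rev_10_5, rev_10_6, rev_10_7, rev_10_8, rev_10_9, rev_11_2, rev_11_3, rev_11_4, rev_11_5, rev_11_6, rev_11_7, rev_11_8, rev_11_9, rev_11_10] at h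
    linarith
  have hQ02 : Q 0 2 = 0 := by
    have h := congrFun (congrFun hy 0) 5
    simp [DxK2, DyK2, Matrix.mul_apply, Fin.sum_univ_succ, Matrix.transpose_apply, Matrix.neg_apply] at h
    try simp only [rev_3_2, rev_4_2, rev_4_3, rev_5_2, rev_5_3, rev_5_4, rev_6_2, rev_6_3, rev_6_4, rev_6_5, rev_7_2, rev_7_3, rev_7_4, rev_7_5, rev_7_6, rev_8_2, rev_8_3, rev_8_4, rev_8_5, rev_8_6, rev_8_7, rev_9_2, rev_9_3, rev_9_4, rev_9_5, rev_9_6, rev_9_7, rev_9_8, rev_10_2, rev_10_3, rev_10_4, rev_10_5, rev_10_6, rev_10_7, rev_10_8, rev_10_9, rev_11_2, rev_11_3, rev_11_4, rev_11_5, rev_11_6, rev_11_7, rev_11_8, rev_11_9, rev_11_10] at h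
    linarith
  have hQ22 : Q 2 2 = 0 := by
    have h := congrFun (congrFun hy 2) 5
    simp [DxK2, DyK2, Matrix.mul_apply, Fin.sum_univ_succ, Matrix.transpose_apply, Matrix.neg_apply] at h
    try simp only [rev_3_2, rev_4_2, rev_4_3, rev_5_2, rev_5_3, rev_5_4, rev_6_2, rev_6_3, rev_6_4, rev_6_5, rev_7_2, rev_7_3, rev_7_4, rev_7_5, rev_7_6, rev_8_2, rev_8_3, rev_8_4, rev_8_5, rev_8_6, rev_8_7, rev_9_2, rev_9_3, rev_9_4, rev_9_5, rev_9_6, rev_9_7, rev_9_8, rev_10_2, rev_10_3, rev_10_4, rev_10_5, rev_10_6, rev_10_7, rev_10_8, rev_10_9, rev_11_2, rev_11_3, rev_11_4, rev_11_5, rev_11_6, rev_11_7, rev_11_8, rev_11_9, rev_11_10] at h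
    linarith
  have hQ80eq : Q 8 0 = -(3 * Q 3 5) := by
    have h := congrFun (congrFun hy 8) 3
    simp [DxK2, DyK2, Matrix.mul_apply, Fin.sum_univ_succ, Matrix.transpose_apply, Matrix.neg_apply] at h
    try simp only [rev_3_2, rev_4_2, rev_4_3, rev_5_2, rev_5_3, rev_5_4, rev_6_2, rev_6_3, rev_6_4, rev_6_5, rev_7_2, rev_7_3, rev_7_4, rev_7_5, rev_7_6, rev_8_2, rev_8_3, rev_8_4, rev_8_5, rev_8_6, rev_8_7, rev_9_2, rev_9_3, rev_9_4, rev_9_5, rev_9_6, rev_9_7, rev_9_8, rev_10_2, rev_10_3, rev_10_4, rev_10_5, rev_10_6, rev_10_7, rev_10_8, rev_10_9, rev_11_2, rev_11_3, rev_11_4, rev_11_5, rev_11_6, rev_11_7, rev_11_8, rev_11_9, rev_11_10] at h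
    linarith
  have hQ62eq : Q 6 2 = -(3 * Q 5 3) := by
    have h := congrFun (congrFun hy 6) 5
    simp [DxK2, DyK2, Matrix.mul_apply, Fin.sum_univ_succ, Matrix.transpose_apply, Matrix.neg_apply] at h
    try simp only [rev_3_2, rev_4_2, rev_4_3, rev_5_2, rev_5_3, rev_5_4, rev_6_2, rev_6_3, rev_6_4, rev_6_5, rev_7_2, rev_7_3, rev_7_4, rev_7_5, rev_7_6, rev_8_2, rev_8_3, rev_8_4, rev_8_5, rev_8_6, rev_8_7, rev_9_2, rev_9_3, rev_9_4, rev_9_5, rev_9_6, rev_9_7, rev_9_8, rev_10_2, rev_10_3, rev_10_4, rev_10_5, rev_10_6, rev_10_7, rev_10_8, rev_10_9, rev_11_2, rev_11_3, rev_11_4, rev_11_5, rev_11_6, rev_11_7, rev_11_8, rev_11_9, rev_11_10] at h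
    linarith
  have hQ82eq : Q 8 2 = -(3 * Q 5 5) := by
    have h := congrFun (congrFun hy 8) 5
    simp [DxK2, DyK2, Matrix.mul_apply, Fin.sum_univ_succ, Matrix.transpose_apply, Matrix.neg_apply] at h
    try simp only [rev_3_2, rev_4_2, rev_4_3, rev_5_2, rev_5_3, rev_5_4, rev_6_2, rev_6_3, rev_6_4, rev_6_5, rev_7_2, rev_7_3, rev_7_4, rev_7_5, rev_7_6, rev_8_2, rev_8_3, rev_8_4, rev_8_5, rev_8_6, rev_8_7, rev_9_2, rev_9_3, rev_9_4, rev_9_5, rev_9_6, rev_9_7, rev_9_8, rev_10_2, rev_10_3, rev_10_4, rev_10_5, rev_10_6, rev_10_7, rev_10_8, rev_10_9, rev_11_2, rev_11_3, rev_11_4, rev_11_5, rev_11_6, rev_11_7, rev_11_8, rev_11_9, rev_11_10] at h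
    linarith
  have E0 : ∀ (i : Fin 9) (k : Fin 12), (Q * corrExt θ0 θ1) i k =
      -((![4, 4/3, 4/5, 4/3, 4/9, 4/15, 4/5, 4/15, 4/25] : Fin 9 → ℝ) i *
        (corrExt θ0 θ1 i k - corrExt (-3/2) (5/2) i k)) := by
    intro i k
    rw [heq]
    simp [massK2, Matrix.neg_apply, Matrix.sub_apply, Matrix.diagonal_mul]
  have hθ0 : θ0 = -3/2 := by
    have e30 := E0 3 0
    have e36 := E0 3 6
    simp [corrExt, Matrix.mul_apply, Fin.sum_univ_succ] at e30 e36
    try simp only [rev_3_2, rev_4_2, rev_4_3, rev_5_2, rev_5_3, rev_5_4, rev_6_2, rev_6_3, rev_6_4, rev_6_5, rev_7_2, rev_7_3, rev_7_4, rev_7_5, rev_7_6, rev_8_2, rev_8_3, rev_8_4, rev_8_5, rev_8_6, rev_8_7, rev_9_2, rev_9_3, rev_9_4, rev_9_5, rev_9_6, rev_9_7, rev_9_8, rev_10_2, rev_10_3, rev_10_4, rev_10_5, rev_10_6, rev_10_7, rev_10_8, rev_10_9, rev_11_2, rev_11_3, rev_11_4, rev_11_5, rev_11_6, rev_11_7,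 rev_11_8, rev_11_9, rev_11_10] at e30 e36
    rw [hQ33] at e30 e36
    linarith
  have h60 : Q 6 0 = 0 := (hs 0 6).trans hQ06
  have hθ1' : θ1 = 5/2 := by
    have e60 := E0 6 0
    have e66 := E0 6 6
    simp [corrExt, Matrix.mul_apply, Fin.sum_univ_succ] at e60 e66
    try simp only [rev_3_2, rev_4_2, rev_4_3, rev_5_2, rev_5_3, rev_5_4, rev_6_2, rev_6_3, rev_6_4, rev_6_5, rev_7_2, rev_7_3, rev_7_4, rev_7_5, rev_7_6, rev_8_2, rev_8_3, rev_8_4, rev_8_5, rev_8_6, rev_8_7, rev_9_2, rev_9_3, rev_9_4, rev_9_5, rev_9_6, rev_9_7, rev_9_8, rev_10_2, rev_10_3, rev_10_4, rev_10_5, rev_10_6, rev_10_7, rev_10_8, rev_10_9, rev_11_2, rev_11_3, rev_11_4, rev_11_5, rev_11_6, rev_11_7, rev_11_8, rev_11_9, rev_11_10] at e60 e66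
    rw [h60, hQ66] at e60 e66
    linarith
  subst hθ0
  subst hθ1'
  refine ⟨rfl, rfl, ?_⟩
  rw [sub_self, Matrix.mul_zero, neg_zero] at heq
  have E : ∀ (i : Fin 9) (k : Fin 12), (Q * corrExt (-3/2) (5/2)) i k = 0 :=
    fun i k => by rw [heq]; rfl
  have f3 : ∀ i, Q i 3 = 0 := by
    intro i
    have ha := E i 0
    have hb := E i 6
    simp [corrExt, Matrix.mul_apply, Fin.sum_univ_succ] at ha hb
    try simp only [rev_3_2, rev_4_2, rev_4_3, rev_5_2, rev_5_3, rev_5_4, rev_6_2, rev_6_3, rev_6_4, rev_6_5, rev_7_2, rev_7_3, rev_7_4, rev_7_5, rev_7_6, rev_8_2, rev_8_3, rev_8_4, rev_8_5, rev_8_6, rev_8_7, rev_9_2, rev_9_3, rev_9_4, rev_9_5, rev_9_6, rev_9_7, rev_9_8, rev_10_2, rev_10_3, rev_10_4, rev_10_5, rev_10_6, rev_10_7, rev_10_8, rev_10_9, rev_11_2, rev_11_3, rev_11_4, rev_11_5, rev_11_6, rev_11_7, rev_11_8, rev_11_9, rev_11_10] at ha hb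
    linarith
  have f1 : ∀ i, Q i 1 = 0 := by
    intro i
    have ha := E i 3
    have hb := E i 9
    simp [corrExt, Matrix.mul_apply, Fin.sum_univ_succ] at ha hb
    try simp only [rev_3_2, rev_4_2, rev_4_3, rev_5_2, rev_5_3, rev_5_4, rev_6_2, rev_6_3, rev_6_4, rev_6_5, rev_7_2, rev_7_3, rev_7_4, rev_7_5, rev_7_6, rev_8_2, rev_8_3, rev_8_4, rev_8_5, rev_8_6, rev_8_7, rev_9_2, rev_9_3, rev_9_4, rev_9_5, rev_9_6, rev_9_7, rev_9_8, rev_10_2, rev_10_3, rev_10_4, rev_10_5, rev_10_6, rev_10_7, rev_10_8, rev_10_9, rev_11_2, rev_11_3, rev_11_4, rev_11_5, rev_11_6, rev_11_7, rev_11_8, rev_11_9, rev_11_10] at ha hb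
    linarith
  have f4 : ∀ i, Q i 4 = 0 := by
    intro i
    have ha := E i 1
    have hb := E i 7
    simp [corrExt, Matrix.mul_apply, Fin.sum_univ_succ] at ha hb
    try simp only [rev_3_2, rev_4_2, rev_4_3, rev_5_2, rev_5_3, rev_5_4, rev_6_2, rev_6_3, rev_6_4, rev_6_5, rev_7_2, rev_7_3, rev_7_4, rev_7_5, rev_7_6, rev_8_2, rev_8_3, rev_8_4, rev_8_5, rev_8_6, rev_8_7, rev_9_2, rev_9_3, rev_9_4, rev_9_5, rev_9_6, rev_9_7, rev_9_8, rev_10_2, rev_10_3, rev_10_4, rev_10_5, rev_10_6, rev_10_7, rev_10_8, rev_10_9, rev_11_2, rev_11_3, rev_11_4, rev_11_5, rev_11_6, rev_11_7, rev_11_8, rev_11_9, rev_11_10] at ha hb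
    linarith
  have f5 : ∀ i, Q i 5 = 0 := by
    intro i
    have ha := E i 2
    have hb := E i 8
    simp [corrExt, Matrix.mul_apply, Fin.sum_univ_succ] at ha hb
    try simp only [rev_3_2, rev_4_2, rev_4_3, rev_5_2, rev_5_3, rev_5_4, rev_6_2, rev_6_3, rev_6_4, rev_6_5, rev_7_2, rev_7_3, rev_7_4, rev_7_5, rev_7_6, rev_8_2, rev_8_3, rev_8_4, rev_8_5, rev_8_6, rev_8_7, rev_9_2, rev_9_3, rev_9_4, rev_9_5, rev_9_6, rev_9_7, rev_9_8, rev_10_2, rev_10_3, rev_10_4, rev_10_5, rev_10_6, rev_10_7, rev_10_8, rev_10_9, rev_11_2, rev_11_3, rev_11_4, rev_11_5, rev_11_6, rev_11_7, rev_11_8, rev_11_9, rev_11_10] at ha hb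
    linarith
  have f7 : ∀ i, Q i 7 = 0 := by
    intro i
    have ha := E i 5
    have hb := E i 11
    simp [corrExt, Matrix.mul_apply, Fin.sum_univ_succ] at ha hb
    try simp only [rev_3_2, rev_4_2, rev_4_3, rev_5_2, rev_5_3, rev_5_4, rev_6_2, rev_6_3, rev_6_4, rev_6_5, rev_7_2, rev_7_3, rev_7_4, rev_7_5, rev_7_6, rev_8_2, rev_8_3, rev_8_4, rev_8_5, rev_8_6, rev_8_7, rev_9_2, rev_9_3, rev_9_4, rev_9_5, rev_9_6, rev_9_7, rev_9_8, rev_10_2, rev_10_3, rev_10_4, rev_10_5, rev_10_6, rev_10_7, rev_10_8, rev_10_9, rev_11_2, rev_11_3, rev_11_4, rev_11_5, rev_11_6, rev_11_7, rev_11_8, rev_11_9, rev_11_10] at ha hb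
    linarith
  have h80 : Q 8 0 = 0 := by have := f5 3; linarith [hQ80eq]
  have h62 : Q 6 2 = 0 := by have := f3 5; linarith [hQ62eq]
  have h82 : Q 8 2 = 0 := by have := f5 5; linarith [hQ82eq]
  have h86 : Q 8 6 = 0 := by have := f7 7; linarith [hQ86eq]
  have h88 : Q 8 8 = 0 := by
    have h5 := E 8 5
    simp [corrExt, Matrix.mul_apply, Fin.sum_univ_succ] at h5
    try simp only [rev_3_2, rev_4_2, rev_4_3, rev_5_2, rev_5_3, rev_5_4, rev_6_2, rev_6_3, rev_6_4, rev_6_5, rev_7_2, rev_7_3, rev_7_4, rev_7_5, rev_7_6, rev_8_2, rev_8_3, rev_8_4, rev_8_5, rev_8_6, rev_8_7, rev_9_2, rev_9_3, rev_9_4, rev_9_5, rev_9_6, rev_9_7, rev_9_8, rev_10_2, rev_10_3, rev_10_4, rev_10_5, rev_10_6, rev_10_7, rev_10_8, rev_10_9, rev_11_2, rev_11_3, rev_11_4, rev_11_5, rev_11_6, rev_11_7, rev_11_8, rev_11_9, rev_11_10] at h5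
    have := f7 8
    linarith [h86]
  have h08 : Q 0 8 = 0 := (hs 8 0).trans h80
  have h26 : Q 2 6 = 0 := (hs 6 2).trans h62
  have h28 : Q 2 8 = 0 := (hs 8 2).trans h82
  have h68 : Q 6 8 = 0 := (hs 8 6).trans h86
  have r0 : ∀ j : Fin 9, Q 0 j = 0 := by
    intro j; fin_cases j
    exacts [hQ00, f1 0, hQ02, f3 0, f4 0, f5 0, hQ06, f7 0, h08]
  have r2 : ∀ j : Fin 9, Q 2 j = 0 := by
    intro j; fin_cases j
    exacts [hQ20, f1 2, hQ22, f3 2, f4 2, f5 2, h26, f7 2, h28]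
  have r6 : ∀ j : Fin 9, Q 6 j = 0 := by
    intro j; fin_cases j
    exacts [h60, f1 6, h62, f3 6, f4 6, f5 6, hQ66, f7 6, h68]
  have r8 : ∀ j : Fin 9, Q 8 j = 0 := by
    intro j; fin_cases j
    exacts [h80, f1 8, h82, f3 8, f4 8, f5 8, h86, f7 8, h88]
  have c0 : ∀ i : Fin 9, Q i 0 = 0 := fun i => (hs i 0).symm.trans (r0 i)
  have c2 : ∀ i : Fin 9, Q i 2 = 0 := fun i => (hs i 2).symm.trans (r2 i)
  have c6 : ∀ i : Fin 9, Q i 6 = 0 := fun i => (hs i 6).symm.trans (r6 i)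
  have c8 : ∀ i : Fin 9, Q i 8 = 0 := fun i => (hs i 8).symm.trans (r8 i)
  ext i j
  fin_cases j
  exacts [c0 i, f1 i, c2 i, f3 i, f4 i, f5 i, c6 i, f7 i, c8 i]
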